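/- Baer's theorem (one direction): if G and H are nonzero subgroups of (ℚ,+) and there exist nonzero a ∈ G, b ∈ H with equal characteristics (h_p^G(a) = h_p^H(b) for all primes p), then G ≅ H. -/

import Mathlib

/-!
For `a ∈ G ≤ ℚ`, the set of `n` with `a / n ∈ G` is closed under divisors and, by Bézout, under
products of coprime numbers, so it is determined by the prime powers it contains, i.e. by the
`p`-heights of `a`. It also determines `G`: by Bézout again, `x ∈ G ↔ a / d ∈ G` where `d` is
the denominator of `x / a`. Hence equal characteristics of `a ∈ G` and `b ∈ H` make
multiplication by `b / a` carry `G` onto `H`.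
-/

/-- The `p`-height of an element `a` of an additive group: the supremum (in `ℕ∞`) of the
`k` such that `a` is divisible by `p^k`. -/
noncomputable def pHeight {G : Type*} [AddCommGroup G] (p : ℕ) (a : G) : ℕ∞ :=
  sSup ((fun k : ℕ => (k : ℕ∞)) '' {k : ℕ | ∃ b : G, (p ^ k : ℕ) • b = a})

theorem IsLowerSet.natCast_le_sSup_image_iff {S : Set ℕ} (hS : IsLowerSet S) (hne : S.Nonempty)
    (k : ℕ) : (k : ℕ∞) ≤ sSup ((fun k : ℕ => (k : ℕ∞)) '' S) ↔ k ∈ S := by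
  refine ⟨fun hk => ?_, fun hk => le_sSup ⟨k, hk, rfl⟩⟩
  by_contra hkS
  have hlt : ∀ j ∈ S, j < k := fun j hj => lt_of_not_ge fun hkj => hkS (hS hkj hj)
  obtain ⟨j, hj⟩ := hne
  have hsup : sSup ((fun k : ℕ => (k : ℕ∞)) '' S) ≤ ((k - 1 : ℕ) : ℕ∞) := by
    refine sSup_le ?_
    rintro _ ⟨i, hi, rfl⟩
    exact Nat.cast_le.mpr (Nat.le_sub_one_of_lt (hlt i hi))
  have hjk : j < k := hlt j hj
  have hk' : k ≤ k - 1 := by exact_mod_cast hk.trans hsup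
  omega

theorem le_pHeight_iff {G : Type*} [AddCommGroup G] (p : ℕ) (a : G) (k : ℕ) :
    (k : ℕ∞) ≤ pHeight p a ↔ ∃ b : G, (p ^ k : ℕ) • b = a := by
  have h0 : ∃ b : G, (p ^ 0 : ℕ) • b = a := ⟨a, by simp⟩
  refine IsLowerSet.natCast_le_sSup_image_iff ?_ ⟨0, h0⟩ k
  rintro k j hjk ⟨b, rfl⟩
  refine ⟨(p ^ (k - j) : ℕ) • b, ?_⟩
  rw [smul_smul, ← pow_add, Nat.add_sub_cancel' hjk]

theorem AddSubgroup.nonempty_addEquiv_of_mem_iff_mul_mem {K : Type*} [DivisionRing K]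
    {G H : AddSubgroup K} {c : K} (hc : c ≠ 0) (h : ∀ x, x ∈ G ↔ c * x ∈ H) :
    Nonempty (G ≃+ H) := by
  let e := DistribMulAction.toAddEquiv₀ K c hc
  have hmap : G.map e.toAddMonoidHom = H := by
    ext y
    rw [AddSubgroup.mem_map_equiv, h]
    simp [e, DistribMulAction.toAddEquiv₀, hc]
  exact ⟨(e.addSubgroupMap G).trans (AddEquiv.addSubgroupCongr hmap)⟩

namespace AddSubgroup

variable {G H : AddSubgroup ℚ} {q r : ℚ}

theorem exists_nsmul_eq_iff_div_mem (a : G) {n : ℕ} (hn : n ≠ 0) :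
    (∃ c : G, n • c = a) ↔ (a : ℚ) / n ∈ G := by
  have hnQ : (n : ℚ) ≠ 0 := Nat.cast_ne_zero.mpr hn
  constructor
  · rintro ⟨c, rfl⟩
    simp [nsmul_eq_mul, hnQ]
  · intro hmem
    refine ⟨⟨(a : ℚ) / n, hmem⟩, Subtype.ext ?_⟩
    simp [nsmul_eq_mul, mul_div_cancel₀ _ hnQ]

theorem div_natCast_mem_of_dvd {s n : ℕ} (hn : n ≠ 0) (hsn : s ∣ n) (h : q / n ∈ G) :
    q / s ∈ G := by
  obtain ⟨t, rfl⟩ := hsn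
  have hs : (s : ℚ) ≠ 0 := by exact_mod_cast left_ne_zero_of_mul hn
  have ht : (t : ℚ) ≠ 0 := by exact_mod_cast right_ne_zero_of_mul hn
  have hq : q / s = t • (q / ((s * t : ℕ) : ℚ)) := by
    rw [nsmul_eq_mul]
    push_cast
    field_simp
  exact hq ▸ G.nsmul_mem h t

theorem div_natCast_mul_mem_iff {s t : ℕ} (hs : s ≠ 0) (ht : t ≠ 0) (hst : s.Coprime t) :
    q / ((s * t : ℕ) : ℚ) ∈ G ↔ q / s ∈ G ∧ q / t ∈ G := by
  have hst0 : s * t ≠ 0 := mul_ne_zero hs ht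
  refine ⟨fun h => ⟨div_natCast_mem_of_dvd hst0 (dvd_mul_right s t) h,
    div_natCast_mem_of_dvd hst0 (dvd_mul_left t s) h⟩, fun ⟨hqs, hqt⟩ => ?_⟩
  obtain ⟨u, v, huv⟩ := Nat.isCoprime_iff_coprime.mpr hst
  have huvQ : (u : ℚ) * s + v * t = 1 := by exact_mod_cast huv
  have hsQ : (s : ℚ) ≠ 0 := Nat.cast_ne_zero.mpr hs
  have htQ : (t : ℚ) ≠ 0 := Nat.cast_ne_zero.mpr ht
  have hq : q / ((s * t : ℕ) : ℚ) = u • (q / t) + v • (q / s) := by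
    rw [zsmul_eq_mul, zsmul_eq_mul]
    push_cast
    field_simp
    linear_combination (-q) * huvQ
  exact hq ▸ G.add_mem (G.zsmul_mem hqt u) (G.zsmul_mem hqs v)

theorem div_natCast_mem_iff_of_prime_pow (hq : q ∈ G) (hr : r ∈ H)
    (h : ∀ p k : ℕ, p.Prime → (q / ((p ^ k : ℕ) : ℚ) ∈ G ↔ r / ((p ^ k : ℕ) : ℚ) ∈ H))
    (n : ℕ) : q / n ∈ G ↔ r / n ∈ H := by
  induction n using Nat.recOnPosPrimePosCoprime with
  | prime_pow p k hp _ => exact h p k hp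
  | zero => simp
  | one => simpa using iff_of_true hq hr
  | coprime s t hs ht hst ihs iht =>
    rw [div_natCast_mul_mem_iff (by omega) (by omega) hst,
      div_natCast_mul_mem_iff (by omega) (by omega) hst, ihs, iht]

theorem mem_iff_div_den_mem (hq0 : q ≠ 0) (hq : q ∈ G) (x : ℚ) :
    x ∈ G ↔ q / (x / q).den ∈ G := by
  have hden : ((x / q).den : ℚ) ≠ 0 := by exact_mod_cast (x / q).den_nz
  have hx : x = (x / q).num • (q / (x / q).den) := by
    rw [zsmul_eq_mul, ← mul_div_assoc, mul_comm, mul_div_assoc, Rat.num_div_den]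
    field_simp
  refine ⟨fun hxG => ?_, fun h => hx ▸ G.zsmul_mem h _⟩
  obtain ⟨u, v, huv⟩ := Rat.isCoprime_num_den (x / q)
  have huvQ : (u : ℚ) * (x / q).num + v * (x / q).den = 1 := by exact_mod_cast huv
  have hqd : q / (x / q).den = u • x + v • q := by
    nth_rw 2 [hx]
    rw [zsmul_eq_mul, zsmul_eq_mul, zsmul_eq_mul]
    field_simp
    linear_combination -huvQ
  exact hqd ▸ G.add_mem (G.zsmul_mem hxG u) (G.zsmul_mem hq v)

theorem mem_iff_mul_mem_of_div_natCast_mem_iff (hq0 : q ≠ 0) (hr0 : r ≠ 0) (hq : q ∈ G)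
    (hr : r ∈ H) (h : ∀ n : ℕ, q / n ∈ G ↔ r / n ∈ H) (x : ℚ) : x ∈ G ↔ r / q * x ∈ H := by
  have hx : r / q * x / r = x / q := by field_simp
  rw [mem_iff_div_den_mem hq0 hq, mem_iff_div_den_mem hr0 hr, hx, h]

end AddSubgroup

theorem baer_isomorphism_of_eq_characteristic_general
    (G H : AddSubgroup ℚ)
    (a : G) (b : H) (ha : a ≠ 0) (hb : b ≠ 0)
    (h : ∀ p : ℕ, p.Prime → pHeight p a = pHeight p b) :
    Nonempty (G ≃+ H) := by
  have ha0 : (a : ℚ) ≠ 0 := by simpa using ha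
  have hb0 : (b : ℚ) ≠ 0 := by simpa using hb
  have hprime_pow : ∀ p k : ℕ, p.Prime →
      ((a : ℚ) / ((p ^ k : ℕ) : ℚ) ∈ G ↔ (b : ℚ) / ((p ^ k : ℕ) : ℚ) ∈ H) := by
    intro p k hp
    have hpk : p ^ k ≠ 0 := pow_ne_zero k hp.ne_zero
    rw [← AddSubgroup.exists_nsmul_eq_iff_div_mem a hpk,
      ← AddSubgroup.exists_nsmul_eq_iff_div_mem b hpk,
      ← le_pHeight_iff, ← le_pHeight_iff, h p hp]
  exact AddSubgroup.nonempty_addEquiv_of_mem_iff_mul_mem (div_ne_zero hb0 ha0)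
    (AddSubgroup.mem_iff_mul_mem_of_div_natCast_mem_iff ha0 hb0 a.2 b.2
      (AddSubgroup.div_natCast_mem_iff_of_prime_pow a.2 b.2 hprime_pow))

/-- Baer's theorem (one direction): if `G`, `H` are nonzero subgroups of
`(ℚ,+)` containing nonzero elements `a`, `b` with equal characteristics, then `G ≅ H`. -/
theorem baer_isomorphism_of_eq_characteristic
    (G H : AddSubgroup ℚ) (hG : G ≠ ⊥) (hH : H ≠ ⊥)
    (a : G) (b : H) (ha : a ≠ 0) (hb : b ≠ 0)
    (h : ∀ p : ℕ, p.Prime → pHeight p a = pHeight p b) :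
    Nonempty (G ≃+ H) :=
  baer_isomorphism_of_eq_characteristic_general G H a b ha hb h
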